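/- Let ψ_λ be differentiable and positive on (0,∞). Then the phase shift ϑ_λ = (1/π)∫₀¹ (1/(1−z²)) log[ψ_λ(λ²/z²)/ψ_λ(λ²z²)] dz satisfies ϑ_λ ≤ (π/2)·sup_{ξ>0} ξψ_λ'(ξ)/ψ_λ(ξ), provided the supremum is finite. -/

import Mathlib

open MeasureTheory Set Real

/-!
Since `ξ ψ'(ξ)/ψ(ξ) ≤ M`, the function `ξ ↦ M log ξ - log ψ(ξ)` is non-decreasing on `(0,∞)`, so
`log[ψ(λ²/z²)/ψ(λ²z²)] ≤ M log(z⁻⁴) = -4M log z` for `0 < z < 1`. Expanding `1/(1-z²)` as a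
geometric series and using `∫₀¹ -log z · z^k dz = 1/(k+1)²`,
`∫₀¹ -log z/(1-z²) dz = ∑ 1/(2n+1)² = π²/8`, and the bound is `(1/π) · 4M · π²/8 = (π/2) M`.
-/

section LogDerivBound

variable {ψ : ℝ → ℝ} {M : ℝ}

theorem monotoneOn_mul_log_sub_log_comp (hpos : ∀ ξ, 0 < ξ → 0 < ψ ξ)
    (hdiff : ∀ ξ, 0 < ξ → DifferentiableAt ℝ ψ ξ) (hM : ∀ ξ, 0 < ξ → ξ * deriv ψ ξ / ψ ξ ≤ M) :
    MonotoneOn (fun ξ => M * log ξ - log (ψ ξ)) (Ioi 0) := by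
  have hderiv : ∀ ξ ∈ Ioi (0 : ℝ), HasDerivAt (fun ξ => M * log ξ - log (ψ ξ))
      (M * ξ⁻¹ - deriv ψ ξ / ψ ξ) ξ := fun ξ hξ =>
    ((hasDerivAt_log (ne_of_gt hξ)).const_mul M).sub
      ((hdiff ξ hξ).hasDerivAt.log (hpos ξ hξ).ne')
  refine monotoneOn_of_hasDerivWithinAt_nonneg (convex_Ioi 0) (HasDerivAt.continuousOn hderiv)
    (fun ξ hξ => (hderiv ξ (interior_subset hξ)).hasDerivWithinAt) fun ξ hξ => ?_
  rw [interior_Ioi] at hξ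
  have hξ0 : (0 : ℝ) < ξ := hξ
  have : M * ξ⁻¹ - deriv ψ ξ / ψ ξ = (M - ξ * deriv ψ ξ / ψ ξ) / ξ := by
    field_simp [(hpos ξ hξ0).ne']
  rw [this]
  exact div_nonneg (sub_nonneg.2 (hM ξ hξ0)) hξ0.le

theorem log_div_le_mul_log_div (hpos : ∀ ξ, 0 < ξ → 0 < ψ ξ)
    (hdiff : ∀ ξ, 0 < ξ → DifferentiableAt ℝ ψ ξ) (hM : ∀ ξ, 0 < ξ → ξ * deriv ψ ξ / ψ ξ ≤ M)
    {a b : ℝ} (ha : 0 < a) (hab : a ≤ b) :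
    log (ψ b / ψ a) ≤ M * log (b / a) := by
  have hb : 0 < b := ha.trans_le hab
  have hH := monotoneOn_mul_log_sub_log_comp hpos hdiff hM (mem_Ioi.2 ha) (mem_Ioi.2 hb) hab
  rw [log_div (hpos b hb).ne' (hpos a ha).ne', log_div hb.ne' ha.ne']
  linarith

theorem phase_shift_integrand_le (hpos : ∀ ξ, 0 < ξ → 0 < ψ ξ)
    (hdiff : ∀ ξ, 0 < ξ → DifferentiableAt ℝ ψ ξ) (hM : ∀ ξ, 0 < ξ → ξ * deriv ψ ξ / ψ ξ ≤ M)
    {lam z : ℝ} (hlam : lam ≠ 0) (hz : z ∈ Ioo (0 : ℝ) 1) :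
    1 / (1 - z ^ 2) * log (ψ (lam ^ 2 / z ^ 2) / ψ (lam ^ 2 * z ^ 2))
      ≤ 4 * M * (-log z / (1 - z ^ 2)) := by
  obtain ⟨hz0, hz1⟩ := hz
  have hsq : 0 < 1 - z ^ 2 := by nlinarith
  have hle : lam ^ 2 * z ^ 2 ≤ lam ^ 2 / z ^ 2 := by
    rw [le_div_iff₀ (by positivity), mul_assoc]
    exact mul_le_of_le_one_right (sq_nonneg lam) (by nlinarith)
  have hratio : log (lam ^ 2 / z ^ 2 / (lam ^ 2 * z ^ 2)) = -4 * log z := by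
    rw [show lam ^ 2 / z ^ 2 / (lam ^ 2 * z ^ 2) = (z ^ 4)⁻¹ by field_simp,
      log_inv, log_pow]
    push_cast
    ring
  have hlog := log_div_le_mul_log_div hpos hdiff hM (by positivity) hle
  rw [hratio] at hlog
  calc 1 / (1 - z ^ 2) * log (ψ (lam ^ 2 / z ^ 2) / ψ (lam ^ 2 * z ^ 2))
      ≤ 1 / (1 - z ^ 2) * (M * (-4 * log z)) := by gcongr
    _ = 4 * M * (-log z / (1 - z ^ 2)) := by ring

end LogDerivBound

theorem integral_neg_log_mul_pow (k : ℕ) :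
    ∫ z in (0 : ℝ)..1, -log z * z ^ k = 1 / ((k : ℝ) + 1) ^ 2 := by
  have hk : (k : ℝ) + 1 ≠ 0 := by positivity
  let G : ℝ → ℝ := fun z => z ^ (k + 1) / ((k : ℝ) + 1) ^ 2 - z * log z * z ^ k / ((k : ℝ) + 1)
  have hcont : ContinuousOn G (Icc 0 1) :=
    (((continuous_pow _).div_const _).sub
      ((continuous_mul_log.mul (continuous_pow _)).div_const _)).continuousOn
  have hderiv : ∀ z ∈ Ioo (0 : ℝ) 1, HasDerivAt G (-log z * z ^ k) z := by
    intro z hz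
    have hz0 : z ≠ 0 := hz.1.ne'
    have h := ((hasDerivAt_pow (k + 1) z).div_const (((k : ℝ) + 1) ^ 2)).sub
      (((hasDerivAt_pow (k + 1) z).mul (hasDerivAt_log hz0)).div_const ((k : ℝ) + 1))
    have hG : G = fun z =>
        z ^ (k + 1) / ((k : ℝ) + 1) ^ 2 - z ^ (k + 1) * log z / ((k : ℝ) + 1) := by
      ext z; simp only [G]; ring
    rw [hG]
    refine h.congr_deriv ?_
    push_cast [Nat.add_sub_cancel, pow_succ]
    field_simp
    ring
  have hint : IntervalIntegrable (fun z => -log z * z ^ k) volume 0 1 :=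
    (intervalIntegral.intervalIntegrable_log' (a := 0) (b := 1)).neg.mul_continuousOn
      (continuous_pow k).continuousOn
  rw [intervalIntegral.integral_eq_sub_of_hasDerivAt_of_le zero_le_one hcont hderiv hint]
  simp [G]

theorem setIntegral_Ioo_neg_log_mul_pow (k : ℕ) :
    ∫ z in Ioo (0 : ℝ) 1, -log z * z ^ k = 1 / ((k : ℝ) + 1) ^ 2 := by
  rw [← integral_Ioc_eq_integral_Ioo, ← intervalIntegral.integral_of_le zero_le_one,
    integral_neg_log_mul_pow]

theorem hasSum_one_div_odd_sq :
    HasSum (fun n : ℕ => 1 / (2 * (n : ℝ) + 1) ^ 2) (π ^ 2 / 8) := by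
  let f : ℕ → ℝ := fun n => 1 / (n : ℝ) ^ 2
  have heven : HasSum (fun n => f (2 * n)) (π ^ 2 / 24) := by
    have h : (fun n => f (2 * n)) = fun n => 1 / 4 * f n := by
      ext n
      simp only [f]
      push_cast
      ring
    rw [h, show π ^ 2 / 24 = 1 / 4 * (π ^ 2 / 6) by ring]
    exact hasSum_zeta_two.mul_left _
  obtain ⟨s, hodd⟩ : Summable fun n => f (2 * n + 1) :=
    hasSum_zeta_two.summable.comp_injective fun m n h => by simpa using h
  have hs : π ^ 2 / 24 + s = π ^ 2 / 6 := (heven.even_add_odd hodd).unique hasSum_zeta_two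
  convert hodd using 1
  · ext n
    simp only [f]
    push_cast
    ring
  · linarith

theorem integral_neg_log_div_one_sub_sq :
    ∫ z in Ioo (0 : ℝ) 1, -log z / (1 - z ^ 2) = π ^ 2 / 8 := by
  let F : ℕ → ℝ → ℝ := fun n z => -log z * z ^ (2 * n)
  have hF_nonneg : ∀ n, ∀ z ∈ Ioo (0 : ℝ) 1, 0 ≤ F n z := fun n z hz =>
    mul_nonneg (neg_nonneg.2 (log_nonpos hz.1.le hz.2.le)) (pow_nonneg hz.1.le _)
  have hF_integral : ∀ n : ℕ, ∫ z in Ioo (0 : ℝ) 1, F n z = 1 / (2 * (n : ℝ) + 1) ^ 2 := by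
    intro n
    simp only [F, setIntegral_Ioo_neg_log_mul_pow]
    push_cast
    ring
  have hF_int : ∀ n, IntegrableOn (F n) (Ioo 0 1) := fun n =>
    Integrable.of_integral_ne_zero (by rw [hF_integral]; positivity)
  have hF_norm : ∀ n, ∫ z in Ioo (0 : ℝ) 1, ‖F n z‖ = 1 / (2 * (n : ℝ) + 1) ^ 2 := by
    intro n
    rw [← hF_integral]
    refine setIntegral_congr_fun measurableSet_Ioo fun z hz => norm_of_nonneg (hF_nonneg n z hz)
  have hgeom : ∀ z ∈ Ioo (0 : ℝ) 1, ∑' n, F n z = -log z / (1 - z ^ 2) := by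
    intro z hz
    have hz2 : z ^ 2 < 1 := by nlinarith [hz.1, hz.2]
    simp only [F, pow_mul, tsum_mul_left, tsum_geometric_of_lt_one (sq_nonneg z) hz2,
      div_eq_mul_inv]
  have := hasSum_integral_of_summable_integral_norm hF_int
    (by simpa only [hF_norm] using hasSum_one_div_odd_sq.summable)
  rw [setIntegral_congr_fun measurableSet_Ioo hgeom] at this
  simp only [hF_integral] at this
  exact this.unique hasSum_one_div_odd_sq

theorem integral_le_of_ae_le_of_integral_nonneg {α : Type*} [MeasurableSpace α] {μ : Measure α}
    {f g : α → ℝ} (hg : Integrable g μ) (hfg : f ≤ᵐ[μ] g) (hg0 : 0 ≤ ∫ a, g a ∂μ) :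
    ∫ a, f a ∂μ ≤ ∫ a, g a ∂μ := by
  by_cases hf : Integrable f μ
  · exact integral_mono_ae hf hg hfg
  · rwa [integral_undef hf]

/-- Let `ψ_λ` be differentiable, positive and non-decreasing on `(0,∞)`. If
`ξ ψ_λ'(ξ)/ψ_λ(ξ) ≤ M` for all `ξ > 0`, then the phase shift
`ϑ_λ = (1/π)∫₀¹ (1/(1-z²)) log[ψ_λ(λ²/z²)/ψ_λ(λ²z²)] dz` satisfies `ϑ_λ ≤ (π/2) M`. -/
theorem phase_shift_bound (ψl : ℝ → ℝ) (lam : ℝ) (hlam : 0 < lam)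
    (hpos : ∀ ξ : ℝ, 0 < ξ → 0 < ψl ξ)
    (hdiff : ∀ ξ : ℝ, 0 < ξ → DifferentiableAt ℝ ψl ξ)
    (hmono : ∀ ξ : ℝ, 0 < ξ → 0 ≤ deriv ψl ξ)
    (M : ℝ) (hM : ∀ ξ : ℝ, 0 < ξ → ξ * deriv ψl ξ / ψl ξ ≤ M) :
    (1 / Real.pi) * ∫ z in Set.Ioo (0 : ℝ) 1,
      (1 / (1 - z ^ 2)) * Real.log (ψl (lam ^ 2 / z ^ 2) / ψl (lam ^ 2 * z ^ 2))
      ≤ Real.pi / 2 * M := by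
  -- Where the integrand is not integrable its integral is `0`, and `0 ≤ M` gives the bound.
  have hM0 : 0 ≤ M :=
    (div_nonneg (mul_nonneg zero_le_one (hmono 1 one_pos)) (hpos 1 one_pos).le).trans
      (hM 1 one_pos)
  have hint : IntegrableOn (fun z => -log z / (1 - z ^ 2)) (Ioo 0 1) :=
    Integrable.of_integral_ne_zero (by rw [integral_neg_log_div_one_sub_sq]; positivity)
  have hbound := integral_le_of_ae_le_of_integral_nonneg (hint.const_mul (4 * M))
    (ae_restrict_of_forall_mem measurableSet_Ioo fun z hz =>
      phase_shift_integrand_le hpos hdiff hM hlam.ne' hz)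
    (by rw [integral_const_mul, integral_neg_log_div_one_sub_sq]; positivity)
  rw [integral_const_mul, integral_neg_log_div_one_sub_sq] at hbound
  calc (1 / π) * ∫ z in Ioo (0 : ℝ) 1,
        (1 / (1 - z ^ 2)) * log (ψl (lam ^ 2 / z ^ 2) / ψl (lam ^ 2 * z ^ 2))
      ≤ 1 / π * (4 * M * (π ^ 2 / 8)) := by gcongr
    _ = π / 2 * M := by field_simp; ring
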